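/- arXiv:1301.3421 — 8 statements merged into one kernel-verified Lean document; each statement's English description precedes it below -/
import Mathlib

section
/- Let V be a complex inner product space of dimension M with a fixed orthonormal basis e_1, …, e_M, and let ψ ∈ ⋀²V. Suppose U and U' are unitary operators on V, k, k' ≥ 0 are integers with 2k ≤ M and 2k' ≤ M, and c_1 ≥ … ≥ c_k > 0 and c'_1 ≥ … ≥ c'_{k'} > 0 are real numbers such that (⋀²U) ψ = Σ_{i=1}^{k} c_i · e_{2i-1} ∧ e_{2i} and (⋀²U') ψ = Σ_{i=1}^{k'} c'_i · e_{2i-1} ∧ e_{2i}. Then k = k' and c_i = c'_i for all 1 ≤ i ≤ k. -/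
open ExteriorAlgebra Finset

noncomputable section

/-- The single-particle Hilbert space: `ℂ^M` with its standard inner product. -/
abbrev V (M : ℕ) : Type := EuclideanSpace ℂ (Fin M)

/-- The fixed orthonormal basis vector `e_n` (1-indexed, `1 ≤ n ≤ M`);
out-of-range indices give `0`. -/
def stdVec (M n : ℕ) : V M :=
  if h : 1 ≤ n ∧ n ≤ M then EuclideanSpace.single (⟨n - 1, by omega⟩ : Fin M) 1 else 0

/-- The wedge `e_{i 0} ∧ ⋯ ∧ e_{i (N-1)}` in the exterior algebra of `V M`. -/
def wedge (M N : ℕ) (i : Fin N → ℕ) : ExteriorAlgebra ℂ (V M) :=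
  ExteriorAlgebra.ιMulti ℂ N fun j => stdVec M (i j)

/-- `i` enumerates a strictly increasing sequence of indices in `{1, …, M}`. -/
def IsBasisIndex (M N : ℕ) (i : Fin N → ℕ) : Prop :=
  StrictMono i ∧ ∀ j, 1 ≤ i j ∧ i j ≤ M

/-- Single occupancy: no two of the indices lie in the same standard pair
`{2k-1, 2k}` (the pair of `n` is `(n+1)/2`). -/
def SingleOcc (N : ℕ) (i : Fin N → ℕ) : Prop :=
  ∀ j k : Fin N, j ≠ k → (i j + 1) / 2 ≠ (i k + 1) / 2

/-- The single occupancy subspace `𝒮 ⊆ ⋀^N V`: the span of all basic single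
occupancy vectors. -/
def SOV (M N : ℕ) : Submodule ℂ (ExteriorAlgebra ℂ (V M)) :=
  Submodule.span ℂ
    {x | ∃ i : Fin N → ℕ, IsBasisIndex M N i ∧ SingleOcc N i ∧ x = wedge M N i}

/-- The exterior power of a unitary operator `U` on `V M`, acting on the whole
exterior algebra (on `⋀^N V` it acts as `⋀^N U`). -/
def luMap (M : ℕ) (U : V M ≃ₗᵢ[ℂ] V M) :
    ExteriorAlgebra ℂ (V M) →ₐ[ℂ] ExteriorAlgebra ℂ (V M) :=
  ExteriorAlgebra.map U.toLinearEquiv.toLinearMap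

/-
Identify a 2-vector `x` with its antisymmetric coefficient matrix `A x`, so that `v ∧ w` becomes
`v wᵀ - w vᵀ`. A unitary `U` acts by congruence, `A (⋀²U x) = Q (A x) Qᵀ` with `Q` unitary,
hence `A Aᴴ` changes by a unitary conjugation and the traces `tr ((A Aᴴ) ^ m)` are invariants.
For the canonical form `Σ cᵢ e_{2i-1} ∧ e_{2i}`, `A Aᴴ = Σ cᵢ² Pᵢ` with `Pᵢ` the orthogonal
projections onto the planes `⟨e_{2i-1}, e_{2i}⟩`, so these traces are `2 Σ cᵢ^(2m)`. Two
decreasing positive sequences with the same power sums coincide: as `m → ∞` the sums are dominated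
by the largest terms, which must therefore agree; remove them and induct.
-/

open Matrix

lemma sum_Icc_one_succ {M : Type*} [AddCommMonoid M] (f : ℕ → M) (n : ℕ) :
    ∑ i ∈ Icc 1 (n + 1), f i = f 1 + ∑ i ∈ Icc 1 n, f (i + 1) := by
  rw [← Ico_add_one_right_eq_Icc, ← Ico_add_one_right_eq_Icc, sum_Ico_eq_sum_range,
    sum_Ico_eq_sum_range, Nat.add_sub_cancel, Nat.add_sub_cancel, sum_range_succ', add_comm]
  simp only [add_comm 1]

lemma AntitoneOn.pow_of_nonneg {α : Type*} [Preorder α] {s : Set α} {f : α → ℝ}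
    (hf : AntitoneOn f s) (hpos : ∀ a ∈ s, 0 ≤ f a) (m : ℕ) : AntitoneOn (fun a => f a ^ m) s :=
  fun _ ha _ hb hab => pow_le_pow_left₀ (hpos _ hb) (hf ha hb hab) m

section PowerSums

variable {k k' : ℕ} {c c' : ℕ → ℝ}

lemma one_le_of_sum_eq (hpos : ∀ i ∈ Icc 1 k, 0 < c i) (hk : 1 ≤ k)
    (hsum : ∑ i ∈ Icc 1 k, c i = ∑ i ∈ Icc 1 k', c' i) : 1 ≤ k' := by
  by_contra! hk'
  obtain rfl : k' = 0 := by omega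
  exact (sum_pos hpos (nonempty_Icc.2 hk)).ne' (by simpa using hsum)

lemma apply_one_le_of_sum_pow_eq (hc' : AntitoneOn c' (Set.Icc 1 k'))
    (hpos : ∀ i ∈ Icc 1 k, 0 < c i) (hpos' : ∀ i ∈ Icc 1 k', 0 < c' i)
    (hsum : ∀ m, ∑ i ∈ Icc 1 k, c i ^ (m + 1) = ∑ i ∈ Icc 1 k', c' i ^ (m + 1))
    (hk : 1 ≤ k) (hk' : 1 ≤ k') : c 1 ≤ c' 1 := by
  by_contra! hlt
  have hc'1 : 0 < c' 1 := hpos' 1 (mem_Icc.2 ⟨le_rfl, hk'⟩)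
  have hratio : 1 < c 1 / c' 1 := (one_lt_div hc'1).2 hlt
  obtain ⟨m, hm⟩ := pow_unbounded_of_one_lt (k' : ℝ) hratio
  have hbound : c 1 ^ (m + 1) ≤ k' * c' 1 ^ (m + 1) :=
    calc c 1 ^ (m + 1) ≤ ∑ i ∈ Icc 1 k, c i ^ (m + 1) :=
          single_le_sum (f := fun i => c i ^ (m + 1)) (fun i hi => (pow_pos (hpos i hi) _).le)
            (mem_Icc.2 ⟨le_rfl, hk⟩)
      _ = ∑ i ∈ Icc 1 k', c' i ^ (m + 1) := hsum m
      _ ≤ ∑ _i ∈ Icc 1 k', c' 1 ^ (m + 1) := sum_le_sum fun i hi =>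
          pow_le_pow_left₀ (hpos' i hi).le
            (hc' (by simp [hk']) (by simpa using hi) (mem_Icc.1 hi).1) _
      _ = k' * c' 1 ^ (m + 1) := by simp
  have : (c 1 / c' 1) ^ (m + 1) ≤ k' := by
    rw [div_pow, div_le_iff₀ (by positivity)]; exact hbound
  have := pow_le_pow_right₀ hratio.le (m.le_add_right 1)
  linarith

lemma AntitoneOn.comp_add_one (hc : AntitoneOn c (Set.Icc 1 (k + 1))) :
    AntitoneOn (fun i => c (i + 1)) (Set.Icc 1 k) := fun i hi j hj hij =>
  hc ⟨by omega, by simp at hi; omega⟩ ⟨by omega, by simp at hj; omega⟩ (by omega)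

theorem eq_of_sum_pow_eq (hc : AntitoneOn c (Set.Icc 1 k)) (hc' : AntitoneOn c' (Set.Icc 1 k'))
    (hpos : ∀ i ∈ Icc 1 k, 0 < c i) (hpos' : ∀ i ∈ Icc 1 k', 0 < c' i)
    (hsum : ∀ m, ∑ i ∈ Icc 1 k, c i ^ (m + 1) = ∑ i ∈ Icc 1 k', c' i ^ (m + 1)) :
    k = k' ∧ ∀ i ∈ Icc 1 k, c i = c' i := by
  induction k generalizing k' c c' with
  | zero =>
    obtain rfl : k' = 0 := by
      by_contra hk'
      have := one_le_of_sum_eq (fun i hi => pow_pos (hpos' i hi) 1) (by omega) (hsum 0).symm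
      simp at this
    simp
  | succ n ih =>
    have hk' : 1 ≤ k' :=
      one_le_of_sum_eq (fun i hi => pow_pos (hpos i hi) 1) n.succ_pos (hsum 0)
    obtain ⟨n', rfl⟩ : ∃ n', k' = n' + 1 := ⟨k' - 1, by omega⟩
    have htop : c 1 = c' 1 :=
      (apply_one_le_of_sum_pow_eq hc' hpos hpos' hsum n.succ_pos hk').antisymm
        (apply_one_le_of_sum_pow_eq hc hpos' hpos (fun m => (hsum m).symm) hk' n.succ_pos)
    obtain ⟨rfl, hrest⟩ := ih hc.comp_add_one hc'.comp_add_one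
      (fun i hi => hpos _ (by simp at hi ⊢; omega))
      (fun i hi => hpos' _ (by simp at hi ⊢; omega))
      (fun m => by simpa [sum_Icc_one_succ, htop] using hsum m)
    refine ⟨rfl, fun i hi => ?_⟩
    rcases (mem_Icc.1 hi).1.eq_or_lt with rfl | hgt
    · exact htop
    · simpa [Nat.sub_add_cancel hgt.le] using hrest (i - 1) (by simp at hi ⊢; omega)

end PowerSums

section OrthogonalFamilies

variable {ι R A : Type*} [CommSemiring R] [Semiring A] [Algebra R A] [DecidableEq ι]
  {s : Finset ι}

lemma sum_smul_mul_sum_smul_of_mul_eq_ite {T S P : ι → A}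
    (h : ∀ i ∈ s, ∀ j ∈ s, T i * S j = if i = j then P i else 0) (w w' : ι → R) :
    (∑ i ∈ s, w i • T i) * (∑ j ∈ s, w' j • S j) = ∑ i ∈ s, (w i * w' i) • P i := by
  rw [sum_mul_sum]
  refine sum_congr rfl fun i hi => ?_
  rw [sum_congr rfl fun j hj => by rw [smul_mul_smul_comm, h i hi j hj]]
  simp [smul_ite, hi]

lemma sum_smul_pow_succ_of_mul_eq_ite {P : ι → A}
    (h : ∀ i ∈ s, ∀ j ∈ s, P i * P j = if i = j then P i else 0) (w : ι → R) (m : ℕ) :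
    (∑ i ∈ s, w i • P i) ^ (m + 1) = ∑ i ∈ s, w i ^ (m + 1) • P i := by
  induction m with
  | zero => simp
  | succ m ih =>
    rw [pow_succ, ih, sum_smul_mul_sum_smul_of_mul_eq_ite h]
    simp only [pow_succ]

end OrthogonalFamilies

section UnitaryConjugation

variable {𝕜 n : Type*} [RCLike 𝕜] [Fintype n] [DecidableEq n]

lemma toEuclideanLin_symm_mem_unitaryGroup (U : EuclideanSpace 𝕜 n ≃ₗᵢ[𝕜] EuclideanSpace 𝕜 n) :
    toEuclideanLin.symm U.toLinearEquiv.toLinearMap ∈ unitaryGroup n 𝕜 := by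
  rw [toEuclideanLin_eq_toLin_orthonormal]
  exact U.toMatrix_mem_unitaryGroup _ _

lemma mul_mul_transpose_mul_conjTranspose {Q : Matrix n n 𝕜} (hQ : Q ∈ unitaryGroup n 𝕜)
    (A : Matrix n n 𝕜) : Q * A * Qᵀ * (Q * A * Qᵀ)ᴴ = Q * (A * Aᴴ) * Qᴴ := by
  have hQt : Qᵀ * (Qᵀ)ᴴ = 1 :=
    Unitary.mul_star_self_of_mem (transpose_mem_unitaryGroup_iff.2 hQ)
  simp only [conjTranspose_mul, Matrix.mul_assoc]
  rw [← Matrix.mul_assoc Qᵀ, hQt, Matrix.one_mul]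

lemma trace_pow_conj_unitary {Q : Matrix n n 𝕜} (hQ : Q ∈ unitaryGroup n 𝕜)
    (B : Matrix n n 𝕜) (m : ℕ) : trace ((Q * B * Qᴴ) ^ m) = trace (B ^ m) := by
  have hconj := map_pow (Unitary.conjStarAlgAut 𝕜 (Matrix n n 𝕜) ⟨Q, hQ⟩) B m
  simp only [Unitary.conjStarAlgAut_apply, star_eq_conjTranspose] at hconj
  rw [← hconj, trace_mul_cycle, ← star_eq_conjTranspose, Unitary.star_mul_self_of_mem hQ,
    Matrix.one_mul]

end UnitaryConjugation

section TwoFormMatrix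

variable {𝕜 n : Type*} [RCLike 𝕜]

def skewOuter {R : Type*} [CommRing R] (v w : n → R) : Matrix n n R :=
  vecMulVec v w - vecMulVec w v

lemma mul_skewOuter_mul_transpose [Fintype n] {R : Type*} [CommRing R] (Q : Matrix n n R)
    (v w : n → R) : Q * skewOuter v w * Qᵀ = skewOuter (Q *ᵥ v) (Q *ᵥ w) := by
  simp only [skewOuter, Matrix.mul_sub, Matrix.sub_mul, mul_vecMulVec, vecMulVec_mul,
    vecMul_transpose]

variable (𝕜 n) in
def skewOuterAlt : EuclideanSpace 𝕜 n [⋀^Fin 2]→ₗ[𝕜] Matrix n n 𝕜 :=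
  AlternatingMap.pi fun a => AlternatingMap.pi fun b =>
    detRowAlternating.compLinearMap
      (LinearMap.pi ![PiLp.projₗ 2 (fun _ : n => 𝕜) a, PiLp.projₗ 2 (fun _ : n => 𝕜) b])

lemma skewOuterAlt_apply (v : Fin 2 → EuclideanSpace 𝕜 n) :
    skewOuterAlt 𝕜 n v = skewOuter (v 0).ofLp (v 1).ofLp := by
  ext a b
  change det (of fun i => ![(v i).ofLp a, (v i).ofLp b]) = _
  simp [skewOuter, det_fin_two, vecMulVec_apply, mul_comm]

variable (𝕜 n) in
def twoFormMatrix : ExteriorAlgebra 𝕜 (EuclideanSpace 𝕜 n) →ₗ[𝕜] Matrix n n 𝕜 :=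
  liftAlternating (Pi.single 2 (skewOuterAlt 𝕜 n))

lemma twoFormMatrix_ιMulti (v : Fin 2 → EuclideanSpace 𝕜 n) :
    twoFormMatrix 𝕜 n (ιMulti 𝕜 2 v) = skewOuter (v 0).ofLp (v 1).ofLp := by
  rw [twoFormMatrix, liftAlternating_apply_ιMulti, Pi.single_eq_same, skewOuterAlt_apply]

lemma twoFormMatrix_ι_mul_ι (v w : EuclideanSpace 𝕜 n) :
    twoFormMatrix 𝕜 n (ι 𝕜 v * ι 𝕜 w) = skewOuter v.ofLp w.ofLp := by
  simpa [ιMulti_apply, List.ofFn_succ] using twoFormMatrix_ιMulti (𝕜 := 𝕜) ![v, w]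

variable [Fintype n] [DecidableEq n] {x : ExteriorAlgebra 𝕜 (EuclideanSpace 𝕜 n)}

lemma twoFormMatrix_map_toEuclideanLin (Q : Matrix n n 𝕜)
    (hx : x ∈ ⋀[𝕜]^2 (EuclideanSpace 𝕜 n)) :
    twoFormMatrix 𝕜 n (map (toEuclideanLin Q) x) = Q * twoFormMatrix 𝕜 n x * Qᵀ := by
  rw [← ιMulti_span_fixedDegree] at hx
  induction hx using Submodule.span_induction with
  | mem y hy =>
    obtain ⟨v, rfl⟩ := hy
    rw [map_apply_ιMulti, twoFormMatrix_ιMulti, twoFormMatrix_ιMulti,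
      mul_skewOuter_mul_transpose]
    rfl
  | zero => simp
  | add y z _ _ hy hz => simp [hy, hz, Matrix.mul_add, Matrix.add_mul]
  | smul a y _ hy => simp [hy]

lemma trace_pow_twoFormMatrix_map (U : EuclideanSpace 𝕜 n ≃ₗᵢ[𝕜] EuclideanSpace 𝕜 n)
    (hx : x ∈ ⋀[𝕜]^2 (EuclideanSpace 𝕜 n)) (m : ℕ) :
    trace ((twoFormMatrix 𝕜 n (map U.toLinearEquiv.toLinearMap x) *
        (twoFormMatrix 𝕜 n (map U.toLinearEquiv.toLinearMap x))ᴴ) ^ m) =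
      trace ((twoFormMatrix 𝕜 n x * (twoFormMatrix 𝕜 n x)ᴴ) ^ m) := by
  set Q := toEuclideanLin.symm U.toLinearEquiv.toLinearMap
  have hQ : Q ∈ unitaryGroup n 𝕜 := toEuclideanLin_symm_mem_unitaryGroup U
  have hU : U.toLinearEquiv.toLinearMap = toEuclideanLin Q :=
    (toEuclideanLin.apply_symm_apply _).symm
  rw [hU, twoFormMatrix_map_toEuclideanLin Q hx, mul_mul_transpose_mul_conjTranspose hQ,
    trace_pow_conj_unitary hQ]

end TwoFormMatrix

section CanonicalForm

lemma stdVec_dotProduct_stdVec {M a : ℕ} (ha₁ : 1 ≤ a) (ha₂ : a ≤ M) (b : ℕ) :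
    (stdVec M a).ofLp ⬝ᵥ (stdVec M b).ofLp = if a = b then 1 else 0 := by
  unfold stdVec
  split_ifs <;> simp [Pi.single_apply, Fin.ext_iff] <;> omega

lemma star_stdVec (M a : ℕ) : star (stdVec M a).ofLp = (stdVec M a).ofLp := by
  unfold stdVec
  split_ifs <;> simp

def canonicalForm (M k : ℕ) (c : ℕ → ℝ) : ExteriorAlgebra ℂ (V M) :=
  ∑ i ∈ Icc 1 k, (c i : ℂ) • (ι ℂ (stdVec M (2 * i - 1)) * ι ℂ (stdVec M (2 * i)))

def pairSkew (M i : ℕ) : Matrix (Fin M) (Fin M) ℂ :=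
  skewOuter (stdVec M (2 * i - 1)).ofLp (stdVec M (2 * i)).ofLp

def pairProj (M i : ℕ) : Matrix (Fin M) (Fin M) ℂ :=
  vecMulVec (stdVec M (2 * i - 1)).ofLp (stdVec M (2 * i - 1)).ofLp +
    vecMulVec (stdVec M (2 * i)).ofLp (stdVec M (2 * i)).ofLp

variable {M k : ℕ}

lemma twoFormMatrix_canonicalForm (c : ℕ → ℝ) :
    twoFormMatrix ℂ (Fin M) (canonicalForm M k c) = ∑ i ∈ Icc 1 k, (c i : ℂ) • pairSkew M i := by
  simp [canonicalForm, pairSkew, twoFormMatrix_ι_mul_ι]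

lemma pairSkew_mul_conjTranspose_pairSkew (hk : 2 * k ≤ M) {i j : ℕ} (hi : i ∈ Icc 1 k)
    (hj : j ∈ Icc 1 k) :
    pairSkew M i * (pairSkew M j)ᴴ = if i = j then pairProj M i else 0 := by
  rw [mem_Icc] at hi hj
  simp only [pairSkew, skewOuter, conjTranspose_sub, conjTranspose_vecMulVec, star_stdVec,
    Matrix.sub_mul, Matrix.mul_sub, vecMulVec_mul_vecMulVec]
  simp (disch := omega) only [stdVec_dotProduct_stdVec]
  split_ifs <;> first | omega | (subst_vars; simp [pairProj])

lemma pairProj_mul_pairProj (hk : 2 * k ≤ M) {i j : ℕ} (hi : i ∈ Icc 1 k) (hj : j ∈ Icc 1 k) :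
    pairProj M i * pairProj M j = if i = j then pairProj M i else 0 := by
  rw [mem_Icc] at hi hj
  simp only [pairProj, Matrix.add_mul, Matrix.mul_add, vecMulVec_mul_vecMulVec]
  simp (disch := omega) only [stdVec_dotProduct_stdVec]
  split_ifs <;> first | omega | (subst_vars; simp)

lemma trace_pairProj {i : ℕ} (hi₁ : 1 ≤ i) (hi₂ : 2 * i ≤ M) : trace (pairProj M i) = 2 := by
  simp (disch := omega) only [pairProj, trace_add, trace_vecMulVec, stdVec_dotProduct_stdVec]
  norm_num

lemma trace_pow_succ_canonicalForm (hk : 2 * k ≤ M) (c : ℕ → ℝ) (m : ℕ) :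
    trace ((twoFormMatrix ℂ (Fin M) (canonicalForm M k c) *
        (twoFormMatrix ℂ (Fin M) (canonicalForm M k c))ᴴ) ^ (m + 1)) =
      2 * ∑ i ∈ Icc 1 k, ((c i ^ 2 : ℝ) : ℂ) ^ (m + 1) := by
  have hAH : (twoFormMatrix ℂ (Fin M) (canonicalForm M k c))ᴴ =
      ∑ i ∈ Icc 1 k, (c i : ℂ) • (pairSkew M i)ᴴ := by
    simp [twoFormMatrix_canonicalForm, conjTranspose_sum]
  rw [hAH, twoFormMatrix_canonicalForm,
    sum_smul_mul_sum_smul_of_mul_eq_ite fun i hi j hj =>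
      pairSkew_mul_conjTranspose_pairSkew hk hi hj,
    sum_smul_pow_succ_of_mul_eq_ite fun i hi j hj => pairProj_mul_pairProj hk hi hj,
    trace_sum, mul_sum]
  refine sum_congr rfl fun i hi => ?_
  rw [mem_Icc] at hi
  rw [trace_smul, trace_pairProj hi.1 (by omega)]
  push_cast
  ring

end CanonicalForm

/-- (Uniqueness of the canonical form for 2-vectors.) If a
2-vector `ψ` is LU-equivalent to both `Σ_{i=1}^{k} c_i · e_{2i-1} ∧ e_{2i}`
and `Σ_{i=1}^{k'} c'_i · e_{2i-1} ∧ e_{2i}` with `c_1 ≥ ⋯ ≥ c_k > 0` and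
`c'_1 ≥ ⋯ ≥ c'_{k'} > 0`, then `k = k'` and `c_i = c'_i` for `1 ≤ i ≤ k`. -/
theorem two_vector_canonical_form_unique (M : ℕ)
    (ψ : ExteriorAlgebra ℂ (V M)) (hψ : ψ ∈ ⋀[ℂ]^2 (V M))
    (U U' : V M ≃ₗᵢ[ℂ] V M) (k k' : ℕ) (c c' : ℕ → ℝ)
    (hk : 2 * k ≤ M) (hk' : 2 * k' ≤ M)
    (hmono : ∀ i j : ℕ, 1 ≤ i → i ≤ j → j ≤ k → c j ≤ c i)
    (hmono' : ∀ i j : ℕ, 1 ≤ i → i ≤ j → j ≤ k' → c' j ≤ c' i)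
    (hpos : ∀ i : ℕ, 1 ≤ i → i ≤ k → 0 < c i)
    (hpos' : ∀ i : ℕ, 1 ≤ i → i ≤ k' → 0 < c' i)
    (hform : luMap M U ψ = ∑ i ∈ Finset.Icc 1 k, (c i : ℂ) •
      (ExteriorAlgebra.ι ℂ (stdVec M (2 * i - 1)) * ExteriorAlgebra.ι ℂ (stdVec M (2 * i))))
    (hform' : luMap M U' ψ = ∑ i ∈ Finset.Icc 1 k', (c' i : ℂ) •
      (ExteriorAlgebra.ι ℂ (stdVec M (2 * i - 1)) * ExteriorAlgebra.ι ℂ (stdVec M (2 * i)))) :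
    k = k' ∧ ∀ i : ℕ, 1 ≤ i → i ≤ k → c i = c' i := by
  have hψU : map U.toLinearEquiv.toLinearMap ψ = canonicalForm M k c := hform
  have hψU' : map U'.toLinearEquiv.toLinearMap ψ = canonicalForm M k' c' := hform'
  have hsum (m : ℕ) :
      ∑ i ∈ Icc 1 k, (c i ^ 2) ^ (m + 1) = ∑ i ∈ Icc 1 k', (c' i ^ 2) ^ (m + 1) := by
    have h := (trace_pow_twoFormMatrix_map U hψ (m + 1)).trans
      (trace_pow_twoFormMatrix_map U' hψ (m + 1)).symm
    rw [hψU, hψU', trace_pow_succ_canonicalForm hk, trace_pow_succ_canonicalForm hk'] at h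
    exact_mod_cast mul_left_cancel₀ two_ne_zero h
  have hanti : AntitoneOn c (Set.Icc 1 k) := fun i hi j hj hij => hmono i j hi.1 hij hj.2
  have hanti' : AntitoneOn c' (Set.Icc 1 k') := fun i hi j hj hij => hmono' i j hi.1 hij hj.2
  have hpos₀ : ∀ i ∈ Icc 1 k, 0 < c i := fun i hi => hpos i (mem_Icc.1 hi).1 (mem_Icc.1 hi).2
  have hpos₀' : ∀ i ∈ Icc 1 k', 0 < c' i := fun i hi =>
    hpos' i (mem_Icc.1 hi).1 (mem_Icc.1 hi).2
  obtain ⟨rfl, hsq⟩ := eq_of_sum_pow_eq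
    (hanti.pow_of_nonneg (fun i hi => (hpos i hi.1 hi.2).le) 2)
    (hanti'.pow_of_nonneg (fun i hi => (hpos' i hi.1 hi.2).le) 2)
    (fun i hi => pow_pos (hpos₀ i hi) 2) (fun i hi => pow_pos (hpos₀' i hi) 2) hsum
  refine ⟨rfl, fun i hi₁ hi₂ => ?_⟩
  have hi : i ∈ Icc 1 k := mem_Icc.2 ⟨hi₁, hi₂⟩
  exact (pow_left_inj₀ (hpos₀ i hi).le (hpos₀' i hi).le two_ne_zero).1 (hsq i hi)
end
end

section
/- Let K and N be integers with K ≥ N ≥ 4. Then C(2K, N) - 2^N · C(K, N) > 4K(K-1). -/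
/-!
Write `D n = C(2K, n) - 2^n C(K, n)`. Pascal's rule `C(m, n+1) (n+1) = C(m, n) (m - n)` gives
`(n+1) D(n+1) = (2K - n) D(n) + n 2^n C(K, n)`, and `2K - n ≥ n + 1` for `n < K`, so starting
from `D 0 = 0` the sequence `D` is nonnegative and nondecreasing on `[0, K]`. Hence
`D N ≥ D 4 = K (K-1) (4K-7) / 2`, which exceeds `4K(K-1)` as soon as `K ≥ 4`.
-/

theorem Nat.cast_choose_succ_mul {R : Type*} [CommRing R] (m n : ℕ) :
    (m.choose (n + 1) : R) * (n + 1) = m.choose n * (m - n) := by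
  rcases le_or_gt n m with h | h
  · rw [← Nat.cast_sub h]
    exact_mod_cast congrArg (Nat.cast (R := R)) (Nat.choose_succ_right_eq m n)
  · simp [Nat.choose_eq_zero_of_lt h, Nat.choose_eq_zero_of_lt (Nat.lt_succ_of_lt h)]

theorem Nat.cast_choose_four_mul {R : Type*} [CommRing R] (m : ℕ) :
    (m.choose 4 : R) * 24 = m * (m - 1) * (m - 2) * (m - 3) := by
  have h0 := Nat.cast_choose_succ_mul (R := R) m 0
  have h1 := Nat.cast_choose_succ_mul (R := R) m 1
  have h2 := Nat.cast_choose_succ_mul (R := R) m 2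
  have h3 := Nat.cast_choose_succ_mul (R := R) m 3
  simp only [Nat.choose_zero_right] at h0
  push_cast at h0 h1 h2 h3
  linear_combination
    6 * h3 + 2 * (m - 3) * h2 + (m - 2) * (m - 3) * h1 + (m - 1) * (m - 2) * (m - 3) * h0

def chooseGap (K n : ℕ) : ℤ := (2 * K).choose n - 2 ^ n * K.choose n

section
variable {K n : ℕ}

theorem chooseGap_succ_mul (K n : ℕ) :
    (n + 1) * chooseGap K (n + 1) =
      (2 * K - n) * chooseGap K n + n * 2 ^ n * K.choose n := by
  have h2K := Nat.cast_choose_succ_mul (R := ℤ) (2 * K) n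
  have hK := Nat.cast_choose_succ_mul (R := ℤ) K n
  push_cast at h2K
  unfold chooseGap
  linear_combination h2K - 2 ^ (n + 1) * hK

theorem chooseGap_le_succ (hn : n < K) (h0 : 0 ≤ chooseGap K n) :
    chooseGap K n ≤ chooseGap K (n + 1) := by
  have hstep := chooseGap_succ_mul K n
  have hK : (n : ℤ) + 1 ≤ K := by exact_mod_cast hn
  have hrest : (0 : ℤ) ≤ n * 2 ^ n * K.choose n := by positivity
  nlinarith

theorem chooseGap_nonneg (hn : n ≤ K) : 0 ≤ chooseGap K n := by
  induction n with
  | zero => simp [chooseGap]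
  | succ n ih => exact (ih (by omega)).trans (chooseGap_le_succ hn (ih (by omega)))

theorem chooseGap_monotoneOn (K : ℕ) : MonotoneOn (chooseGap K) (Set.Iic K) :=
  monotoneOn_of_le_succ Set.ordConnected_Iic fun _ _ hn hsucc =>
    chooseGap_le_succ (Order.succ_le_iff.mp hsucc) (chooseGap_nonneg hn)

theorem two_mul_chooseGap_four (K : ℕ) : 2 * chooseGap K 4 = K * (K - 1) * (4 * K - 7) := by
  have h2K := Nat.cast_choose_four_mul (R := ℤ) (2 * K)
  have hK := Nat.cast_choose_four_mul (R := ℤ) K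
  push_cast at h2K
  refine mul_left_cancel₀ (by norm_num : (12 : ℤ) ≠ 0) ?_
  unfold chooseGap
  linear_combination h2K - 16 * hK

theorem four_mul_lt_chooseGap_four (hK : 4 ≤ K) : (4 * K * (K - 1) : ℤ) < chooseGap K 4 := by
  have h4 := two_mul_chooseGap_four K
  have hK' : (4 : ℤ) ≤ K := by exact_mod_cast hK
  have hpos : (0 : ℤ) < K * (K - 1) * (4 * K - 15) := by
    apply mul_pos (mul_pos _ _) <;> linarith
  linarith

end

/-- For integers `K ≥ N ≥ 4`, `C(2K, N) - 2^N · C(K, N) > 4K(K-1)`. -/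
theorem choose_gap_even (K N : ℕ) (hN : 4 ≤ N) (hKN : N ≤ K) :
    (4 * K * (K - 1) : ℤ) <
      ((2 * K).choose N : ℤ) - 2 ^ N * (K.choose N : ℤ) :=
  (four_mul_lt_chooseGap_four (hN.trans hKN)).trans_le
    (chooseGap_monotoneOn K (hN.trans hKN) hKN hN)
end

section
/- Let K and N be integers with N ≥ 4 and 2K + 1 ≥ 2N. Then 4K² + 2^N · C(K, N) + 2^{N-1} · C(K, N-1) < C(2K+1, N). -/
/-!
Both sides are compared through `C(n, m + 1) · (m + 1) = C(n, m) · (n - m)`. Passing from `N` to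
`N + 1` multiplies `2^N C(K, N)` by `2(K - N)/(N + 1)` but `C(2K + 1, N)` by the larger factor
`(2K + 1 - N)/(N + 1)`; this first gives `2^N C(K, N) ≤ C(2K + 1, N)`, and then the surplus `C(2K + 1, N)` pays for the new term `2^{N+1} C(K, N + 1)`.
So the gap never shrinks as `N` grows, and it suffices to check `N = 4`, a polynomial inequality
in `K`.
-/

namespace Nat

theorem choose_add_two_pow_mul_choose_succ_le {K m : ℕ} (hm : m ≤ K)
    (h : 2 ^ m * K.choose m ≤ (2 * K + 1).choose m) :
    (2 * K + 1).choose m + 2 ^ (m + 1) * K.choose (m + 1) ≤ (2 * K + 1).choose (m + 1) := by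
  refine Nat.le_of_mul_le_mul_right ?_ m.succ_pos
  calc ((2 * K + 1).choose m + 2 ^ (m + 1) * K.choose (m + 1)) * (m + 1)
      = (2 * K + 1).choose m * (m + 1) + 2 ^ m * K.choose m * (2 * (K - m)) := by
        rw [add_mul, pow_succ, mul_assoc _ (K.choose (m + 1)), choose_succ_right_eq]; ring
    _ ≤ (2 * K + 1).choose m * (m + 1) + (2 * K + 1).choose m * (2 * (K - m)) := by gcongr
    _ = (2 * K + 1).choose m * (2 * K + 1 - m) := by rw [← mul_add]; congr 1; omega
    _ = (2 * K + 1).choose (m + 1) * (m + 1) := (choose_succ_right_eq _ _).symm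

theorem two_pow_mul_choose_le_choose_two_mul_add_one (K m : ℕ) :
    2 ^ m * K.choose m ≤ (2 * K + 1).choose m := by
  induction m with
  | zero => simp
  | succ m ih =>
    rcases le_or_gt m K with hm | hm
    · exact le_of_add_le_right (choose_add_two_pow_mul_choose_succ_le hm ih)
    · simp [choose_eq_zero_of_lt (Nat.lt_succ_of_lt hm)]

theorem choose_gap_odd_four {K : ℕ} (hK : 4 ≤ K) :
    4 * K ^ 2 + 2 ^ 4 * K.choose 4 + 2 ^ 3 * K.choose 3 < (2 * K + 1).choose 4 := by
  obtain ⟨k, rfl⟩ : ∃ k, K = k + 4 := ⟨K - 4, by omega⟩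
  have h3 := descFactorial_eq_factorial_mul_choose (k + 4) 3
  have h4 := descFactorial_eq_factorial_mul_choose (k + 4) 4
  have h4' := descFactorial_eq_factorial_mul_choose (2 * k + 9) 4
  simp only [descFactorial_succ, descFactorial_zero, factorial, reduceSubDiff,
    show 2 * (k + 4) + 1 = 2 * k + 9 by ring] at h3 h4 h4' ⊢
  nlinarith

end Nat

/-- For integers `N ≥ 4` and `2K + 1 ≥ 2N`,
`4K² + 2^N · C(K, N) + 2^{N-1} · C(K, N-1) < C(2K+1, N)`. -/
theorem choose_gap_odd (K N : ℕ) (hN : 4 ≤ N) (hKN : 2 * N ≤ 2 * K + 1) :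
    4 * K ^ 2 + 2 ^ N * K.choose N + 2 ^ (N - 1) * K.choose (N - 1) <
      (2 * K + 1).choose N := by
  induction N, hN using Nat.le_induction with
  | base => exact Nat.choose_gap_odd_four (by omega)
  | succ N hN ih =>
    have step := Nat.choose_add_two_pow_mul_choose_succ_le (by omega : N ≤ K)
      (Nat.two_pow_mul_choose_le_choose_two_mul_add_one K N)
    rw [Nat.add_sub_cancel]
    linarith [ih (by omega), Nat.zero_le (2 ^ (N - 1) * K.choose (N - 1))]
end

section
/- Let M > 4 be an even integer and let K = M/2. Then for every integer p with 0 ≤ p ≤ K - 1, a_p^{(M)} ≠ a_{M-1-p}^{(M)}. -/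
/-!
Let `T(a, b) = Σ_{i ≤ b} (-1)^(b-i) C(a+i, a)` be the alternating partial sums of a column of
Pascal's triangle. Exchanging the two summation indices gives `a_q = a_{M-2-q}`, so for `p ≥ 1`
the claim is `a_p ≠ a_{p-1}`. The double sums defining `a_p` and `a_{p-1}` share a rectangle, and
`a_p - a_{p-1} = T(p, M-2-p) - T(M-1-p, p-1)`. Pascal's rule gives
`T(a+1, b+1) = T(a, b+1) + T(a+1, b)`, which propagates the comparison
`T(b+1, a) ≤ T(a+1, b)` for `a ≤ b` (strict once `a < b`, `2 ≤ b`) from the edge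
`T(b+1, 0) = 1`, `T(1, b) = ⌊b/2⌋ + 1` by induction on `a + b`. For `p = 0` evenness is needed:
`a_0 = T(0, M-2) = 1`, whereas `a_{M-1}` lies outside the range and is `0`.
-/

/-- The coefficients `a_p^{(M)} = Σ_{k=0}^{p} Σ_{j=0}^{M-2-p} (-1)^{M-2-k-j} C(k+j, k)`
for `0 ≤ p ≤ M-2`, and `0` outside this range. -/
def acoef (M p : ℕ) : ℤ :=
  if p ≤ M - 2 then
    ∑ k ∈ Finset.range (p + 1), ∑ j ∈ Finset.range (M - 2 - p + 1),
      (-1 : ℤ) ^ (M - 2 - k - j) * ((k + j).choose k : ℤ)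
  else 0

open Finset

theorem Finset.sum_range_succ_sum_sub_sum_sum_range_succ {G : Type*} [AddCommGroup G]
    (f : ℕ → ℕ → G) (P Q : ℕ) :
    ∑ k ∈ range (P + 1), ∑ j ∈ range Q, f k j - ∑ k ∈ range P, ∑ j ∈ range (Q + 1), f k j =
      ∑ j ∈ range Q, f P j - ∑ k ∈ range P, f k Q := by
  simp only [sum_range_succ, sum_add_distrib]
  abel

def altColSum (a b : ℕ) : ℤ := ∑ i ∈ range (b + 1), (-1) ^ (b - i) * ((a + i).choose a : ℤ)

namespace altColSum

theorem zero_right (a : ℕ) : altColSum a 0 = 1 := by simp [altColSum]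

theorem succ_right (a b : ℕ) :
    altColSum a (b + 1) = (a + b + 1).choose a - altColSum a b := by
  have hsign : ∀ i ∈ range (b + 1), (-1 : ℤ) ^ (b + 1 - i) = -(-1) ^ (b - i) := fun i hi => by
    rw [Nat.sub_add_comm (mem_range_succ_iff.mp hi), pow_succ, mul_neg_one]
  rw [altColSum, sum_range_succ, sum_congr rfl fun i hi => by rw [hsign i hi], altColSum]
  simp only [neg_mul, sum_neg_distrib, Nat.sub_self, pow_zero, one_mul, ← add_assoc]
  abel

theorem zero_left (b : ℕ) : altColSum 0 b = if Even b then 1 else 0 := by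
  induction b with
  | zero => simp [zero_right]
  | succ b ih => by_cases h : Even b <;> simp [succ_right, ih, h, Nat.even_add_one]

theorem one_left (b : ℕ) : altColSum 1 b = (b / 2 : ℕ) + 1 := by
  induction b with
  | zero => simp [zero_right]
  | succ b ih =>
    rw [succ_right, ih, Nat.choose_one_right]
    omega

theorem succ_succ (a b : ℕ) :
    altColSum (a + 1) (b + 1) = altColSum a (b + 1) + altColSum (a + 1) b := by
  induction b with
  | zero => simp [succ_right, zero_right]
  | succ b ih =>
    have pascal : ((a + 1 + (b + 1) + 1).choose (a + 1) : ℤ) =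
        (a + (b + 1) + 1).choose a + (a + 1 + b + 1).choose (a + 1) := by
      rw [show a + 1 + (b + 1) + 1 = (a + b + 2) + 1 by ring,
        show a + (b + 1) + 1 = a + b + 2 by ring, show a + 1 + b + 1 = a + b + 2 by ring]
      exact_mod_cast Nat.choose_succ_succ' _ _
    linarith [succ_right (a + 1) (b + 1), succ_right a (b + 1), succ_right (a + 1) b]

theorem swap_le : ∀ {a b : ℕ}, a ≤ b → altColSum (b + 1) a ≤ altColSum (a + 1) b
  | 0, b, _ => by rw [zero_right, one_left]; omega
  | a + 1, b + 1, hab => by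
    obtain rfl | hlt : a = b ∨ a < b := by omega
    · exact le_rfl
    rw [succ_succ (b + 1) a, succ_succ (a + 1) b]
    have := swap_le (a := a) (b := b + 1) (by omega)
    have := swap_le (a := a + 1) (b := b) (by omega)
    omega

theorem swap_lt : ∀ {a b : ℕ}, a < b → 2 ≤ b → altColSum (b + 1) a < altColSum (a + 1) b
  | 0, b, _, hb => by rw [zero_right, one_left]; omega
  | a + 1, b + 1, hab, _ => by
    rw [succ_succ (b + 1) a, succ_succ (a + 1) b]
    have := swap_lt (a := a) (b := b + 1) (by omega) (by omega)
    have := swap_le (a := a + 1) (b := b) (by omega)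
    omega

end altColSum

theorem acoef_zero (M : ℕ) : acoef M 0 = altColSum 0 (M - 2) := by
  simp [acoef, altColSum]

theorem acoef_of_lt {M p : ℕ} (h : M - 2 < p) : acoef M p = 0 := if_neg h.not_ge

theorem acoef_symm {M q r : ℕ} (h : M = q + r + 2) : acoef M q = acoef M r := by
  subst h
  simp only [acoef, Nat.add_sub_cancel, show q + r - q = r by omega, show q + r - r = q by omega,
    le_add_self, le_add_iff_nonneg_right, zero_le, if_true]
  rw [sum_comm]
  refine sum_congr rfl fun j _ => sum_congr rfl fun k _ => ?_
  rw [Nat.sub_right_comm, add_comm k j, Nat.choose_symm_add]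

theorem acoef_succ_sub {M r s : ℕ} (h : M = r + s + 3) :
    acoef M (r + 1) - acoef M r = altColSum (r + 1) s - altColSum (s + 1) r := by
  subst h
  have hr : r ≤ r + s + 3 - 2 := by omega
  have hr1 : r + 1 ≤ r + s + 3 - 2 := by omega
  simp only [acoef, if_pos hr, if_pos hr1, show r + s + 3 - 2 - (r + 1) + 1 = s + 1 by omega,
    show r + s + 3 - 2 - r + 1 = s + 1 + 1 by omega]
  rw [sum_range_succ_sum_sub_sum_sum_range_succ, altColSum, altColSum]
  congr 1
  · refine sum_congr rfl fun j _ => ?_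
    rw [show r + s + 3 - 2 - (r + 1) - j = s - j by omega]
  · refine sum_congr rfl fun k hk => ?_
    have := mem_range_succ_iff.mp hk
    rw [show r + s + 3 - 2 - k - (s + 1) = r - k by omega, add_comm k, Nat.choose_symm_add]

/-- For even `M > 4` and `K = M/2`: for all `0 ≤ p ≤ K-1`,
`a_p^{(M)} ≠ a_{M-1-p}^{(M)}`. -/
theorem acoef_ne_even (M : ℕ) (hM : 4 < M) (hMeven : Even M) (K : ℕ) (hK : K = M / 2)
    (p : ℕ) (hp : p ≤ K - 1) : acoef M p ≠ acoef M (M - 1 - p) := by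
  rcases p with _ | r
  · have h0 : acoef M 0 = 1 := by
      rw [acoef_zero, altColSum.zero_left, if_pos (hMeven.tsub even_two)]
    rw [h0, acoef_of_lt (by omega)]
    exact one_ne_zero
  · obtain ⟨s, hs⟩ : ∃ s, M = r + s + 3 := ⟨M - r - 3, by omega⟩
    have hsymm : acoef M (M - 1 - (r + 1)) = acoef M r := acoef_symm (by omega)
    have hdiff := acoef_succ_sub hs
    have hlt : altColSum (s + 1) r < altColSum (r + 1) s := altColSum.swap_lt (by omega) (by omega)
    rw [hsymm]
    omega
end

section
/- Let M > 4 be an odd integer and let K = (M-1)/2. Then for every integer p with 1 ≤ p ≤ K, a_p^{(M)} ≠ a_{M-p}^{(M)}. -/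
/-!
Up to sign, `a_p^{(M)}` is the alternating sum `T(p, q) = Σ_{k ≤ p, j ≤ q} (-1)^{k+j} C(k+j, k)`
over the rectangle `[0, p] × [0, q]`, `q = M - 2 - p`, and by the symmetry `T(p, q) = T(q, p)` so
is `a_{M-p}^{(M)}`, over `[0, p-2] × [0, q+2]` (for `p = 1` it vanishes, as does `T(0, q+1)`).
Moving one unit from the first side of the rectangle to the second changes `T` by the difference
of an alternating partial sum along a column and one along a row. Pairing consecutive terms by
Pascal's rule turns each into a sum of binomial coefficients over indices of one parity, and
comparing these termwise by unimodality of `C(n, ·)` shows that `T` increases weakly in the first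
step and strictly in the second.
-/

open Finset

theorem Nat.choose_le_choose_of_le_of_add_le {n a b : ℕ} (hab : a ≤ b) (h : a + b ≤ n) :
    n.choose a ≤ n.choose b := by
  have below_half : ∀ c, a ≤ c → c ≤ n / 2 → n.choose a ≤ n.choose c := by
    intro c hac
    induction c, hac using Nat.le_induction with
    | base => exact fun _ => le_rfl
    | succ c _ ih =>
      exact fun hc => (ih (by omega)).trans (Nat.choose_le_succ_of_lt_half_left (by omega))
  rcases le_or_gt b (n / 2) with hb | hb
  · exact below_half b hab hb
  · rw [← Nat.choose_symm (by omega : b ≤ n)]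
    exact below_half _ (by omega) (by omega)

theorem neg_one_pow_eq_neg_of_odd_add {R : Type*} [Ring R] {m n : ℕ} (h : Odd (m + n)) :
    (-1 : R) ^ m = -(-1) ^ n := by
  calc (-1 : R) ^ m = (-1) ^ (m + n) * (-1) ^ n := by
        rw [pow_add, mul_assoc, ← pow_add, ← two_mul, pow_mul, neg_one_sq, one_pow, mul_one]
    _ = -(-1) ^ n := by rw [h.neg_one_pow, neg_one_mul]

def altRectSum (p q : ℕ) : ℤ :=
  ∑ k ∈ range (p + 1), ∑ j ∈ range (q + 1), (-1 : ℤ) ^ (k + j) * ((k + j).choose k : ℤ)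

def altChooseSum (r J : ℕ) : ℤ :=
  ∑ j ∈ range (J + 1), (-1 : ℤ) ^ (J + j) * ((r + j).choose j : ℤ)

/-- `Σ_{i ≤ J, i ≡ J mod 2} C(r + i, r)`, indexed by `i = J - 2t`. -/
def parityChooseSum (r J : ℕ) : ℕ :=
  ∑ t ∈ range (J / 2 + 1), (r + (J - 2 * t)).choose r

theorem altRectSum_comm (p q : ℕ) : altRectSum p q = altRectSum q p := by
  unfold altRectSum
  rw [sum_comm]
  refine sum_congr rfl fun k _ => sum_congr rfl fun j _ => ?_
  rw [add_comm j k, Nat.choose_symm_add]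

theorem altRectSum_zero_left_of_odd {q : ℕ} (hq : Odd q) : altRectSum 0 q = 0 := by
  simp only [altRectSum, zero_add, sum_range_one, Nat.choose_zero_right, Nat.cast_one, mul_one,
    neg_one_geom_sum]
  exact if_pos hq.add_one

theorem acoef_eq_neg_altRectSum {M p : ℕ} (hM : Odd (M - 2)) (hp : p ≤ M - 2) :
    acoef M p = -altRectSum p (M - 2 - p) := by
  rw [acoef, if_pos hp, altRectSum, ← sum_neg_distrib]
  refine sum_congr rfl fun k hk => ?_
  rw [← sum_neg_distrib]
  refine sum_congr rfl fun j hj => ?_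
  have hkj : k + j ≤ M - 2 := by
    have := mem_range.mp hk
    have := mem_range.mp hj
    omega
  have hsign : Odd (M - 2 - k - j + (k + j)) := by
    rwa [Nat.sub_sub, Nat.sub_add_cancel hkj]
  rw [neg_one_pow_eq_neg_of_odd_add hsign, neg_mul]

theorem altRectSum_succ_left {a b : ℕ} (hab : Even (a + b)) :
    altRectSum (a + 1) b = altRectSum a b - altChooseSum (a + 1) b := by
  rw [altRectSum, sum_range_succ, ← altRectSum, altChooseSum, sub_eq_add_neg, ← sum_neg_distrib]
  congr 1
  refine sum_congr rfl fun j _ => ?_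
  have hsign : Odd (a + 1 + j + (b + j)) := by
    obtain ⟨c, hc⟩ := hab
    exact ⟨c + j, by omega⟩
  rw [neg_one_pow_eq_neg_of_odd_add hsign, Nat.choose_symm_add, neg_mul]

theorem altRectSum_succ_right {a b : ℕ} (hab : Even (a + b)) :
    altRectSum a (b + 1) = altRectSum a b - altChooseSum (b + 1) a := by
  rw [altRectSum_comm, altRectSum_succ_left (by rwa [add_comm]), altRectSum_comm]

theorem altRectSum_succ_right_sub_succ_left {a b : ℕ} (hab : Even (a + b)) :
    altRectSum a (b + 1) - altRectSum (a + 1) b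
      = altChooseSum (a + 1) b - altChooseSum (b + 1) a := by
  rw [altRectSum_succ_left hab, altRectSum_succ_right hab]
  ring

theorem altChooseSum_succ_add_two (r J : ℕ) :
    altChooseSum (r + 1) (J + 2) = altChooseSum (r + 1) J + ((r + J + 2).choose r : ℤ) := by
  have pascal : (r + 1 + (J + 2)).choose (J + 2)
      = (r + 1 + (J + 1)).choose (J + 1) + (r + J + 2).choose r := by
    rw [show r + 1 + (J + 2) = (r + J + 2) + 1 by ring, Nat.choose_succ_succ',
      show r + J + 2 = r + (J + 2) by ring, Nat.choose_symm_add]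
    congr 2
    ring
  have shift : ∀ j ∈ range (J + 1), (-1 : ℤ) ^ (J + 2 + j) * ((r + 1 + j).choose j : ℤ)
      = (-1) ^ (J + j) * ((r + 1 + j).choose j : ℤ) := fun j _ => by
    rw [show J + 2 + j = J + j + 2 by ring, pow_add, neg_one_sq, mul_one]
  rw [altChooseSum, sum_range_succ, sum_range_succ, sum_congr rfl shift, ← altChooseSum, pascal,
    Odd.neg_one_pow ⟨J + 1, by ring⟩, Even.neg_one_pow ⟨J + 2, by ring⟩]
  push_cast
  ring

theorem parityChooseSum_add_two (r J : ℕ) :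
    parityChooseSum r (J + 2) = parityChooseSum r J + (r + J + 2).choose r := by
  rw [parityChooseSum, show (J + 2) / 2 = J / 2 + 1 by omega, sum_range_succ', parityChooseSum]
  congr 1
  exact sum_congr rfl fun t _ => by congr 2; omega

theorem altChooseSum_succ_eq_parityChooseSum (r J : ℕ) :
    altChooseSum (r + 1) J = parityChooseSum r J := by
  induction J using Nat.twoStepInduction with
  | zero => simp [altChooseSum, parityChooseSum]
  | one => simp [altChooseSum, parityChooseSum, sum_range_succ]
  | more J ih _ =>
    rw [altChooseSum_succ_add_two, ih, parityChooseSum_add_two]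
    push_cast
    rfl

theorem parityChooseSum_le_sum_range {a b : ℕ} (hab : a ≤ b) :
    parityChooseSum b a ≤ ∑ t ∈ range (a / 2 + 1), (a + (b - 2 * t)).choose a := by
  refine sum_le_sum fun t ht => ?_
  have ht : 2 * t ≤ a := by
    have := mem_range.mp ht
    omega
  calc (b + (a - 2 * t)).choose b = (b + (a - 2 * t)).choose (a - 2 * t) := Nat.choose_symm_add
    _ ≤ (b + (a - 2 * t)).choose a := Nat.choose_le_choose_of_le_of_add_le (by omega) (by omega)
    _ = (a + (b - 2 * t)).choose a := by congr 1; omega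

theorem parityChooseSum_le {a b : ℕ} (hab : a ≤ b) : parityChooseSum b a ≤ parityChooseSum a b :=
  (parityChooseSum_le_sum_range hab).trans <|
    sum_le_sum_of_subset (range_subset_range.mpr (by omega))

theorem parityChooseSum_lt {a b : ℕ} (hab : a + 2 ≤ b) :
    parityChooseSum b a < parityChooseSum a b :=
  (parityChooseSum_le_sum_range (by omega)).trans_lt <|
    sum_lt_sum_of_subset (range_subset_range.mpr (by omega)) (i := b / 2)
      (mem_range.mpr (by omega)) (by simp only [mem_range]; omega)
      (Nat.choose_pos (by omega)) fun _ _ _ => Nat.zero_le _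

theorem altRectSum_succ_left_le {a b : ℕ} (hab : Even (a + b)) (h : a ≤ b) :
    altRectSum (a + 1) b ≤ altRectSum a (b + 1) := by
  have hdiff := altRectSum_succ_right_sub_succ_left hab
  rw [altChooseSum_succ_eq_parityChooseSum, altChooseSum_succ_eq_parityChooseSum] at hdiff
  have hle : (parityChooseSum b a : ℤ) ≤ parityChooseSum a b := mod_cast parityChooseSum_le h
  linarith

theorem altRectSum_succ_left_lt {a b : ℕ} (hab : Even (a + b)) (h : a + 2 ≤ b) :
    altRectSum (a + 1) b < altRectSum a (b + 1) := by
  have hdiff := altRectSum_succ_right_sub_succ_left hab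
  rw [altChooseSum_succ_eq_parityChooseSum, altChooseSum_succ_eq_parityChooseSum] at hdiff
  have hlt : (parityChooseSum b a : ℤ) < parityChooseSum a b := mod_cast parityChooseSum_lt h
  linarith

/-- For odd `M > 4` and `K = (M-1)/2`: for all `1 ≤ p ≤ K`,
`a_p^{(M)} ≠ a_{M-p}^{(M)}`. -/
theorem acoef_ne_odd (M : ℕ) (hM : 4 < M) (hModd : Odd M) (K : ℕ) (hK : K = (M - 1) / 2)
    (p : ℕ) (hp1 : 1 ≤ p) (hp2 : p ≤ K) : acoef M p ≠ acoef M (M - p) := by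
  have hodd : Odd (M - 2) := Nat.Odd.sub_even (by omega) hModd even_two
  obtain ⟨c, hc⟩ := id hodd
  obtain ⟨q, hq⟩ : ∃ q, M - 2 - p = q := ⟨_, rfl⟩
  rw [acoef_eq_neg_altRectSum hodd (by omega), hq]
  obtain rfl | ⟨a, rfl⟩ : p = 1 ∨ ∃ a, p = a + 2 :=
    (by omega : p = 1 ∨ 2 ≤ p).imp_right Nat.exists_eq_add_of_le'
  · have hlt := altRectSum_succ_left_lt (a := 0) (b := q) ⟨c, by omega⟩ (by omega)
    rw [altRectSum_zero_left_of_odd ⟨c, by omega⟩] at hlt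
    rw [acoef, if_neg (by omega)]
    exact neg_ne_zero.mpr hlt.ne
  · rw [acoef_eq_neg_altRectSum hodd (by omega), altRectSum_comm (M - (a + 2)),
      show M - 2 - (M - (a + 2)) = a by omega, show M - (a + 2) = q + 1 + 1 by omega, neg_inj.ne]
    have hle := altRectSum_succ_left_le (a := a + 1) (b := q) ⟨c, by omega⟩ (by omega)
    have hlt := altRectSum_succ_left_lt (a := a) (b := q + 1) ⟨c, by omega⟩ (by omega)
    exact (hle.trans_lt hlt).ne
end

section
/- Let M ≥ 3 be an integer. Then for every integer p with 1 ≤ p ≤ M-3, the coefficients satisfy the recurrence a_p^{(M)} = a_{p-1}^{(M-1)} + a_p^{(M-1)} + (-1)^M. -/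
/-!
Up to the sign `(-1)^M`, `a_p^{(M)}` is the rectangular partial sum `S(p+1, M-1-p)` of the array
`g(k, j) = (-1)^(k+j) C(k+j, k)`, the coefficients of `1 / (1 + x + y)`. Pascal's rule says
`g(k+1, j+1) + g(k, j+1) + g(k+1, j) = 0`, so summing the three shifted arrays over a rectangle
leaves only the corner term `g(0, 0) = 1`: `S(p+1, q+1) + S(p, q+1) + S(p+1, q) = 1`.
-/

open Finset

def altBinom (k j : ℕ) : ℤ := (-1) ^ (k + j) * ((k + j).choose k : ℤ)

def altBinomSum (p q : ℕ) : ℤ := ∑ k ∈ range p, ∑ j ∈ range q, altBinom k j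

lemma altBinom_zero_left (j : ℕ) : altBinom 0 j = (-1) ^ j := by
  simp [altBinom]

lemma altBinom_zero_right (k : ℕ) : altBinom k 0 = (-1) ^ k := by
  simp [altBinom]

lemma altBinom_succ_succ_add (k j : ℕ) :
    altBinom (k + 1) (j + 1) + altBinom k (j + 1) + altBinom (k + 1) j = 0 := by
  simp only [altBinom, show k + 1 + (j + 1) = k + j + 1 + 1 by ring,
    show k + (j + 1) = k + j + 1 by ring, show k + 1 + j = k + j + 1 by ring,
    Nat.choose_succ_succ, pow_succ]
  push_cast
  ring

lemma sum_altBinom_succ_add (k q : ℕ) :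
    ∑ j ∈ range (q + 1), altBinom (k + 1) j + ∑ j ∈ range (q + 1), altBinom k j
      + ∑ j ∈ range q, altBinom (k + 1) j = 0 := by
  induction q with
  | zero => simp [altBinom_zero_right, pow_succ]
  | succ q ih =>
    simp only [sum_range_succ] at ih ⊢
    linear_combination ih + altBinom_succ_succ_add k q

lemma sum_altBinom_zero_succ_add (q : ℕ) :
    ∑ j ∈ range (q + 1), altBinom 0 j + ∑ j ∈ range q, altBinom 0 j = 1 := by
  induction q with
  | zero => simp [altBinom_zero_left]
  | succ q ih =>
    simp only [sum_range_succ, altBinom_zero_left, pow_succ] at ih ⊢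
    linear_combination ih

lemma altBinomSum_succ_add (p q : ℕ) :
    altBinomSum (p + 1) (q + 1) + altBinomSum p (q + 1) + altBinomSum (p + 1) q = 1 := by
  induction p with
  | zero => simpa [altBinomSum] using sum_altBinom_zero_succ_add q
  | succ p ih =>
    unfold altBinomSum at *
    simp only [sum_range_succ _ p, sum_range_succ _ (p + 1)] at ih ⊢
    linear_combination ih + sum_altBinom_succ_add p q

lemma acoef_eq_neg_one_pow_mul_altBinomSum {M p : ℕ} (h : p + 2 ≤ M) :
    acoef M p = (-1) ^ M * altBinomSum (p + 1) (M - 1 - p) := by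
  rw [acoef, if_pos (by omega), altBinomSum, show M - 1 - p = M - 2 - p + 1 by omega, mul_sum]
  refine sum_congr rfl fun k _ => ?_
  rw [mul_sum]
  refine sum_congr rfl fun j _ => ?_
  obtain ⟨d, rfl⟩ : ∃ d, M = d + (k + j) + 2 := ⟨M - 2 - k - j, by grind⟩
  rw [altBinom, ← mul_assoc, ← pow_add, show d + (k + j) + 2 - 2 - k - j = d by omega,
    show d + (k + j) + 2 + (k + j) = d + 2 * (k + j + 1) by ring, pow_add, pow_mul, neg_one_sq,
    one_pow, mul_one]

theorem acoef_recurrence_general (M : ℕ) (p : ℕ) (hp1 : 1 ≤ p) (hp2 : p ≤ M - 3) :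
    acoef M p = acoef (M - 1) (p - 1) + acoef (M - 1) p + (-1 : ℤ) ^ M := by
  rw [acoef_eq_neg_one_pow_mul_altBinomSum (by omega : p + 2 ≤ M),
    acoef_eq_neg_one_pow_mul_altBinomSum (by omega : p - 1 + 2 ≤ M - 1),
    acoef_eq_neg_one_pow_mul_altBinomSum (by omega : p + 2 ≤ M - 1)]
  obtain ⟨n, rfl⟩ : ∃ n, M = n + 1 := ⟨M - 1, by omega⟩
  obtain ⟨q, hq⟩ : ∃ q, n - p = q + 1 := ⟨n - p - 1, by omega⟩
  simp only [Nat.add_sub_cancel, Nat.sub_add_cancel hp1, hq, show n - 1 - p = q by omega,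
    show n - 1 - (p - 1) = q + 1 by omega, pow_succ]
  linear_combination (-(-1) ^ n : ℤ) * altBinomSum_succ_add p q

/-- For `M ≥ 3` and `1 ≤ p ≤ M-3`, the coefficients satisfy
`a_p^{(M)} = a_{p-1}^{(M-1)} + a_p^{(M-1)} + (-1)^M`. -/
theorem acoef_recurrence (M : ℕ) (hM : 3 ≤ M) (p : ℕ) (hp1 : 1 ≤ p) (hp2 : p ≤ M - 3) :
    acoef M p = acoef (M - 1) (p - 1) + acoef (M - 1) p + (-1 : ℤ) ^ M :=
  acoef_recurrence_general M p hp1 hp2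
end

section
/- Let K ≥ 3 be an integer and set M = 2K. Then the finite sequence a_0^{(M)}, a_1^{(M)}, …, a_{K-1}^{(M)} is strictly increasing: a_p^{(M)} < a_{p+1}^{(M)} for all 0 ≤ p ≤ K-2. -/
open Finset

theorem sum_range_three_term {A : Type*} [AddCommMonoid A] (F : ℕ → ℕ → A)
    (hF : ∀ k j, F (k + 1) (j + 1) + F (k + 1) j + F k (j + 1) = 0) (k n : ℕ) :
    ∑ j ∈ range (n + 2), F (k + 1) j + ∑ j ∈ range (n + 1), F (k + 1) j
      + ∑ j ∈ range (n + 2), F k j = F (k + 1) 0 + F k 0 := by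
  rw [sum_range_succ' (F (k + 1)), sum_range_succ' (F k)]
  have h : ∑ j ∈ range (n + 1), (F (k + 1) (j + 1) + F (k + 1) j + F k (j + 1)) = 0 :=
    sum_eq_zero fun j _ => hF k j
  rw [sum_add_distrib, sum_add_distrib] at h
  rw [← add_zero (F (k + 1) 0 + F k 0), ← h]
  abel

def altChoose (k j : ℕ) : ℤ := (-1) ^ (k + j) * ((k + j).choose k : ℤ)

theorem altChoose_comm (k j : ℕ) : altChoose k j = altChoose j k := by
  rw [altChoose, altChoose, add_comm j k, Nat.choose_symm_add]

theorem altChoose_zero_right (k : ℕ) : altChoose k 0 = (-1) ^ k := by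
  simp [altChoose]

theorem altChoose_zero_left (j : ℕ) : altChoose 0 j = (-1) ^ j := by
  rw [altChoose_comm, altChoose_zero_right]

theorem altChoose_succ_succ (k j : ℕ) :
    altChoose (k + 1) (j + 1) + altChoose (k + 1) j + altChoose k (j + 1) = 0 := by
  simp only [altChoose, show k + 1 + (j + 1) = k + j + 1 + 1 by omega,
    show k + (j + 1) = k + j + 1 by omega, show k + 1 + j = k + j + 1 by omega,
    Nat.choose_succ_succ', pow_succ]
  push_cast
  ring

def boxSum (m n : ℕ) : ℤ :=
  ∑ k ∈ range (m + 1), ∑ j ∈ range (n + 1), altChoose k j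

theorem acoef_eq_boxSum {M p : ℕ} (hM : Even M) (hp : p ≤ M - 2) :
    acoef M p = boxSum p (M - 2 - p) := by
  rw [acoef, if_pos hp, boxSum]
  refine sum_congr rfl fun k hk => sum_congr rfl fun j hj => ?_
  rw [mem_range] at hk hj
  obtain ⟨r, rfl⟩ := hM
  have sign : Even (r + r - 2 - k - j) ↔ Even (k + j) := by simp only [Nat.even_iff]; omega
  rw [altChoose, neg_one_pow_congr sign]

theorem boxSum_comm (m n : ℕ) : boxSum m n = boxSum n m := by
  rw [boxSum, sum_comm]
  exact sum_congr rfl fun j _ => sum_congr rfl fun k _ => altChoose_comm k j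

theorem boxSum_zero_left_succ_add (n : ℕ) : boxSum 0 (n + 1) + boxSum 0 n = 1 := by
  simp only [boxSum, zero_add, sum_range_one, altChoose_zero_left]
  rw [sum_range_succ']
  simp only [pow_succ, mul_neg_one, sum_neg_distrib]
  ring

theorem boxSum_succ_succ (m n : ℕ) :
    boxSum (m + 1) (n + 1) + boxSum (m + 1) n + boxSum m (n + 1) = 1 := by
  have rows (k i : ℕ) : ∑ j ∈ range (i + 2), altChoose (k + 1) j
      + ∑ j ∈ range (i + 1), altChoose (k + 1) j
      + ∑ j ∈ range (i + 2), altChoose k j = 0 := by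
    rw [sum_range_three_term altChoose altChoose_succ_succ, altChoose_zero_right,
      altChoose_zero_right, pow_succ]
    ring
  -- the row sums satisfy the three-term relation in the transposed form, so sum them over `k`
  have box := sum_range_three_term (fun i k => ∑ j ∈ range (i + 1), altChoose k j)
    (fun i k => by linarith [rows k i]) n m
  have row0 := boxSum_zero_left_succ_add n
  simp only [boxSum, zero_add, sum_range_one] at box row0 ⊢
  rw [show m + 2 = m + 1 + 1 from rfl] at box
  linarith

theorem boxSum_zero_left (t : ℕ) : boxSum 0 (2 * t) = 1 ∧ boxSum 0 (2 * t + 1) = 0 := by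
  induction t with
  | zero => simp [boxSum, sum_range_succ, altChoose]
  | succ t ih =>
    have h₁ := boxSum_zero_left_succ_add (2 * t + 1)
    have h₂ := boxSum_zero_left_succ_add (2 * t + 2)
    rw [show 2 * (t + 1) = 2 * t + 2 by ring]
    constructor <;> linarith

theorem boxSum_one_left (t : ℕ) : boxSum 1 (2 * t) = -t ∧ boxSum 1 (2 * t + 1) = t + 1 := by
  induction t with
  | zero =>
    have h₀ : boxSum 1 0 = 0 := by rw [boxSum_comm]; exact (boxSum_zero_left 0).2
    have h₁ := boxSum_succ_succ 0 0
    have h₂ := boxSum_zero_left 0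
    simp only [mul_zero, zero_add] at h₂ ⊢
    push_cast
    constructor <;> linarith
  | succ t ih =>
    have h₁ := boxSum_succ_succ 0 (2 * t + 1)
    have h₂ := boxSum_succ_succ 0 (2 * t + 2)
    have h₃ := boxSum_zero_left (t + 1)
    rw [show 2 * (t + 1) = 2 * t + 2 by ring] at h₃ ⊢
    push_cast
    constructor <;> linarith

theorem boxSum_two_left (t : ℕ) :
    boxSum 2 (2 * t) = t ^ 2 + t + 1 ∧ boxSum 2 (2 * t + 1) = -(t + 1) ^ 2 := by
  induction t with
  | zero =>
    have h₀ : boxSum 2 0 = 1 := by rw [boxSum_comm]; exact (boxSum_zero_left 1).1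
    have h₁ := boxSum_succ_succ 1 0
    have h₂ := boxSum_one_left 0
    simp only [mul_zero, zero_add] at h₂ ⊢
    push_cast at h₂ ⊢
    constructor <;> linarith
  | succ t ih =>
    have h₁ := boxSum_succ_succ 1 (2 * t + 1)
    have h₂ := boxSum_succ_succ 1 (2 * t + 2)
    have h₃ := boxSum_one_left (t + 1)
    rw [show 2 * (t + 1) = 2 * t + 2 by ring] at h₃ ⊢
    push_cast at h₃ ⊢
    constructor <;> nlinarith

def boxGap (p q : ℕ) : ℤ := boxSum (p + 1) q - boxSum p (q + 1)

theorem boxGap_comm (p q : ℕ) : boxGap q p = -boxGap p q := by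
  rw [boxGap, boxGap, boxSum_comm q, boxSum_comm (q + 1)]
  ring

theorem boxGap_add_two (p q : ℕ) :
    boxGap (p + 2) (q + 2) = boxGap (p + 2) q + 2 * boxGap (p + 1) (q + 1) + boxGap p (q + 2) := by
  have h₁ := boxSum_succ_succ (p + 2) (q + 1)
  have h₂ := boxSum_succ_succ (p + 1) (q + 2)
  have h₃ := boxSum_succ_succ p (q + 2)
  have h₄ := boxSum_succ_succ (p + 2) q
  simp only [boxGap]
  linarith

theorem boxGap_zero_odd (d : ℕ) : boxGap 0 (2 * d + 1) = d := by
  rw [boxGap, (boxSum_one_left d).2, show 2 * d + 1 + 1 = 2 * (d + 1) by ring,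
    (boxSum_zero_left _).1]
  ring

theorem boxGap_one_even (d : ℕ) : boxGap 1 (2 * d + 2) = (d + 1) ^ 2 := by
  rw [boxGap, show 2 * d + 2 = 2 * (d + 1) by ring, (boxSum_two_left _).1, (boxSum_one_left _).2]
  push_cast
  ring

theorem boxGap_pos : ∀ p d : ℕ, 1 ≤ p + d → 0 < boxGap p (p + 2 * d + 1)
  | 0, d, h => by
    rw [zero_add, boxGap_zero_odd]
    omega
  | 1, d, _ => by
    rw [show 1 + 2 * d + 1 = 2 * d + 2 by ring, boxGap_one_even]
    positivity
  | p + 2, 0, _ => by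
    have h₁ := boxGap_pos (p + 1) 0 (by omega)
    have h₂ := boxGap_pos p 1 (by omega)
    -- the recurrence leaves the region `p < q`; antisymmetry brings that term back
    have hrec := boxGap_add_two p (p + 1)
    rw [boxGap_comm (p + 1)] at hrec
    ring_nf at h₁ h₂ hrec ⊢
    linarith
  | p + 2, d + 1, _ => by
    have h₁ := boxGap_pos (p + 2) d (by omega)
    have h₂ := boxGap_pos (p + 1) (d + 1) (by omega)
    have h₃ := boxGap_pos p (d + 2) (by omega)
    have hrec := boxGap_add_two p (p + 2 * d + 3)
    ring_nf at h₁ h₂ h₃ hrec ⊢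
    linarith

theorem acoef_succ_sub_acoef {M p : ℕ} (hM : Even M) (hp : p + 1 ≤ M - 2) :
    acoef M (p + 1) - acoef M p = boxGap p (M - 3 - p) := by
  rw [acoef_eq_boxSum hM hp, acoef_eq_boxSum hM (by omega), boxGap,
    show M - 2 - (p + 1) = M - 3 - p by omega, show M - 2 - p = M - 3 - p + 1 by omega]

/-- For `K ≥ 3` and `M = 2K`, the sequence
`a_0^{(M)}, a_1^{(M)}, …, a_{K-1}^{(M)}` is strictly increasing. -/
theorem acoef_strictMono (K : ℕ) (hK : 3 ≤ K) (M : ℕ) (hM : M = 2 * K)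
    (p : ℕ) (hp : p ≤ K - 2) : acoef M p < acoef M (p + 1) := by
  have step := acoef_succ_sub_acoef (p := p) (hM ▸ even_two_mul K) (by omega)
  have gap := boxGap_pos p (K - 2 - p) (by omega)
  rw [show p + 2 * (K - 2 - p) + 1 = M - 3 - p by omega] at gap
  linarith
end

section
/- Let M ≥ 2 be an integer and work in the polynomial ring ℝ[x_1, …, x_M]. Let a, b ∈ {1, …, M} be distinct indices, and for 0 ≤ j ≤ M-2 let σ_j^{(a,b)} denote the j-th elementary symmetric polynomial in the M-2 variables {x_1, …, x_M} \ {x_a, x_b}. Then σ_j^{(a,b)} - (-1)^j · Σ_{k=0}^{j} x_a^{j-k} x_b^{k} belongs to the ideal I generated by the elementary symmetric polynomials σ_1, …, σ_M of x_1, …, x_M. -/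
/-!
Adding `x` to a multiset `s` multiplies `∏ (1 + xᵢ t)` by `1 + x t`; inverting that factor gives
`eₙ(s) = ∑_{k+l=n} (-x)ᵏ eₗ(x ::ₘ s)`. Modulo `I` every `eₗ` of the full set of variables with
`l > 0` vanishes, so deleting `x_a` leaves `eₗ ≡ (-x_a)ˡ`, and deleting `x_b` as well leaves the
convolution `∑_{k+l=n} (-x_b)ᵏ (-x_a)ˡ`.
-/

open MvPolynomial Finset

section
variable {R : Type*}

theorem Multiset.esymm_cons_succ [CommSemiring R] (x : R) (s : Multiset R) (n : ℕ) :
    (x ::ₘ s).esymm (n + 1) = s.esymm (n + 1) + x * s.esymm n := by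
  simp only [esymm, powersetCard_cons, map_add, sum_add, map_map, Function.comp_def, prod_cons,
    sum_map_mul_left]

variable [CommRing R]

theorem Multiset.esymm_eq_sum_antidiagonal_esymm_cons (x : R) (s : Multiset R) (n : ℕ) :
    s.esymm n =
      ∑ p ∈ Finset.HasAntidiagonal.antidiagonal n, (-x) ^ p.1 * (x ::ₘ s).esymm p.2 := by
  induction n with
  | zero => simp [esymm]
  | succ n ih =>
    rw [Finset.Nat.sum_antidiagonal_succ, esymm_cons_succ]
    simp only [pow_zero, one_mul, pow_succ', mul_assoc, ← Finset.mul_sum, ← ih]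
    ring

theorem Multiset.esymm_eq_neg_pow_of_esymm_cons_eq_zero {x : R} {s : Multiset R}
    (h : ∀ k, 0 < k → (x ::ₘ s).esymm k = 0) (n : ℕ) : s.esymm n = (-x) ^ n := by
  rw [Multiset.esymm_eq_sum_antidiagonal_esymm_cons x, Finset.sum_eq_single (n, 0)]
  · simp [esymm]
  · rintro ⟨k, l⟩ hkl hne
    have hl : 0 < l := by
      rw [Finset.HasAntidiagonal.mem_antidiagonal] at hkl
      grind
    simp [h l hl]
  · simp

theorem Multiset.esymm_eq_of_esymm_cons_cons_eq_zero {x y : R} {s : Multiset R}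
    (h : ∀ k, 0 < k → (x ::ₘ y ::ₘ s).esymm k = 0) (n : ℕ) :
    s.esymm n = (-1) ^ n * ∑ k ∈ Finset.range (n + 1), x ^ (n - k) * y ^ k := by
  simp_rw [Multiset.esymm_eq_sum_antidiagonal_esymm_cons y s,
    Multiset.esymm_eq_neg_pow_of_esymm_cons_eq_zero h, Finset.mul_sum,
    Finset.Nat.sum_antidiagonal_eq_sum_range_succ (fun k l => (-y) ^ k * (-x) ^ l)]
  refine Finset.sum_congr rfl fun k hk => ?_
  obtain ⟨l, rfl⟩ := Nat.exists_eq_add_of_le (Finset.mem_range_succ_iff.mp hk)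
  rw [Nat.add_sub_cancel_left, neg_pow y, neg_pow x, pow_add]
  ring

end

theorem MvPolynomial.esymm_mem_span_esymm {σ R : Type*} [Fintype σ] [CommSemiring R] {k : ℕ}
    (hk : 0 < k) :
    esymm σ R k ∈ Ideal.span (esymm σ R '' Set.Icc 1 (Fintype.card σ)) := by
  rcases le_or_gt k (Fintype.card σ) with hle | hlt
  · exact Ideal.subset_span ⟨k, ⟨hk, hle⟩, rfl⟩
  · have hempty : (univ : Finset σ).powersetCard k = ∅ :=
      Finset.powersetCard_eq_empty.mpr (by rwa [Finset.card_univ])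
    simp [esymm, hempty]

theorem Finset.univ_val_eq_cons_cons_sdiff_pair {ι : Type*} [Fintype ι] [DecidableEq ι] {a b : ι}
    (hab : a ≠ b) : (univ : Finset ι).val = a ::ₘ b ::ₘ (univ \ {a, b}).val := by
  rw [← Finset.insert_val_of_notMem (by simp), ← Finset.insert_val_of_notMem (by simp [hab])]
  congr 1
  ext
  simp only [mem_univ, mem_insert, mem_sdiff, mem_singleton, true_and]
  tauto

theorem esymm_two_removed_congruence_general (M : ℕ) (a b : Fin M) (hab : a ≠ b)
    (j : ℕ) :
    (∑ t ∈ Finset.powersetCard j ((Finset.univ : Finset (Fin M)) \ {a, b}),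
        ∏ i ∈ t, (X i : MvPolynomial (Fin M) ℝ))
      - (-1 : MvPolynomial (Fin M) ℝ) ^ j *
          ∑ k ∈ Finset.range (j + 1), X a ^ (j - k) * X b ^ k
      ∈ Ideal.span ((fun n => MvPolynomial.esymm (Fin M) ℝ n) '' Set.Icc 1 M) := by
  set I := Ideal.span ((fun n => MvPolynomial.esymm (Fin M) ℝ n) '' Set.Icc 1 M)
  let x : Fin M → MvPolynomial (Fin M) ℝ ⧸ I := fun i => Ideal.Quotient.mk I (X i)
  have hx : ∀ k, 0 < k → (x a ::ₘ x b ::ₘ (univ \ {a, b}).val.map x).esymm k = 0 := by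
    intro k hk
    rw [← Multiset.map_cons, ← Multiset.map_cons, ← univ_val_eq_cons_cons_sdiff_pair hab,
      Finset.esymm_map_val]
    simp only [x, ← map_prod, ← map_sum, Ideal.Quotient.eq_zero_iff_mem]
    have hmem := esymm_mem_span_esymm (σ := Fin M) (R := ℝ) hk
    rw [Fintype.card_fin] at hmem
    exact hmem
  have hquot := Multiset.esymm_eq_of_esymm_cons_cons_eq_zero hx j
  rw [Finset.esymm_map_val] at hquot
  rw [← Ideal.Quotient.eq]
  simpa [x, map_sum, map_prod] using hquot

/-- Let `M ≥ 2`, let `a ≠ b` be two of the `M` variable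
indices and `0 ≤ j ≤ M-2`. Then the `j`-th elementary symmetric polynomial
`σ_j^{(a,b)}` in the `M-2` variables other than `x_a, x_b` satisfies
`σ_j^{(a,b)} ≡ (-1)^j Σ_{k=0}^{j} x_a^{j-k} x_b^{k}` modulo the ideal `I`
generated by the elementary symmetric polynomials `σ_1, …, σ_M`. -/
theorem esymm_two_removed_congruence (M : ℕ) (hM : 2 ≤ M) (a b : Fin M) (hab : a ≠ b)
    (j : ℕ) (hj : j ≤ M - 2) :
    (∑ t ∈ Finset.powersetCard j ((Finset.univ : Finset (Fin M)) \ {a, b}),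
        ∏ i ∈ t, (X i : MvPolynomial (Fin M) ℝ))
      - (-1 : MvPolynomial (Fin M) ℝ) ^ j *
          ∑ k ∈ Finset.range (j + 1), X a ^ (j - k) * X b ^ k
      ∈ Ideal.span ((fun n => MvPolynomial.esymm (Fin M) ℝ n) '' Set.Icc 1 M) :=
  esymm_two_removed_congruence_general M a b hab j
end
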